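/- If G is a graph with Z₊(G) = Z(G), then pt₊(G) ≤ ⌈pt(G)/2⌉. -/

import Mathlib

namespace ZF

variable {V : Type*} [Fintype V] [DecidableEq V]

/-- A valid standard zero forcing force within the vertex set `U`, given blue set `B`:
`u` is blue, `v` is its unique white neighbor in `U`. -/
def ZFValid (G : SimpleGraph V) (U B : Set V) (u v : V) : Prop :=
  u ∈ U ∧ v ∈ U ∧ u ∈ B ∧ v ∉ B ∧ G.Adj u v ∧
    ∀ w ∈ U, G.Adj u w → w ∉ B → w = v

/-- `whiteConn G U B a b` : `a` and `b` are joined by a walk through white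
(non-blue) vertices of `U` (possibly trivial). -/
def whiteConn (G : SimpleGraph V) (U B : Set V) : V → V → Prop :=
  Relation.ReflTransGen (fun a b => G.Adj a b ∧ a ∈ U ∧ b ∈ U ∧ a ∉ B ∧ b ∉ B)

/-- A valid PSD force within the vertex set `U`, given blue set `B`:
`u` is blue and `v` is the unique neighbor of `u` in the component of the
white subgraph containing `v`. -/
def PSDValid (G : SimpleGraph V) (U B : Set V) (u v : V) : Prop :=
  u ∈ U ∧ v ∈ U ∧ u ∈ B ∧ v ∉ B ∧ G.Adj u v ∧
    ∀ w ∈ U, G.Adj u w → w ∉ B → whiteConn G U B v w → w = v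

/-- One propagation step for a generic color change rule `valid`. -/
def step (valid : Set V → V → V → Prop) (B : Set V) : Set V :=
  B ∪ {v | ∃ u, valid B u v}

/-- Iterated propagation. -/
def iter (valid : Set V → V → V → Prop) (B : Set V) : ℕ → Set V :=
  fun k => (step valid)^[k] B

/-- `B ⊆ U` is a forcing set of the induced subgraph on `U` for the rule `valid`. -/
def IsForcingSet (valid : Set V → V → V → Prop) (U B : Set V) : Prop :=
  B ⊆ U ∧ ∃ k, U ⊆ iter valid B k

/-- Propagation time of the set `B` for rule `valid` on the induced subgraph on `U`. -/
noncomputable def propTime (valid : Set V → V → V → Prop) (U B : Set V) : ℕ :=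
  sInf {k | U ⊆ iter valid B k}

/-- Vertices blue after `k` time-steps of the family of forces `F`, starting from `B`. -/
def expand (B : Set V) (F : ℕ → Set (V × V)) : ℕ → Set V
  | 0 => B
  | k + 1 => expand B F k ∪ {v | ∃ u, (u, v) ∈ F (k + 1)}

/-- A relaxed chronology of forces (for the rule `valid`) for the forcing set `B`
on the induced subgraph on `U`, with completion time `K`: at each time-step an
arbitrary subset of the currently valid forces is performed (no vertex being
forced twice in one step), and all of `U` is blue after step `K`. -/
structure RelaxedChron (valid : Set V → V → V → Prop) (U B : Set V)
    (K : ℕ) (F : ℕ → Set (V × V)) : Prop where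
  subset : B ⊆ U
  init : F 0 = ∅
  bound : ∀ k, K < k → F k = ∅
  forcesValid : ∀ k < K, ∀ u v, (u, v) ∈ F (k + 1) → valid (expand B F k) u v
  uniqueForcer : ∀ k u₁ u₂ v, (u₁, v) ∈ F k → (u₂, v) ∈ F k → u₁ = u₂
  complete : U ⊆ expand B F K

/-- The underlying set of forces of a relaxed chronology. -/
def forcesOf (F : ℕ → Set (V × V)) (K : ℕ) : Set (V × V) :=
  {p | ∃ k, 1 ≤ k ∧ k ≤ K ∧ p ∈ F k}

/-- The terminus of a relaxed chronology: the vertices (of `U`) performing no force. -/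
def terminus (U : Set V) (F : ℕ → Set (V × V)) (K : ℕ) : Set V :=
  {v ∈ U | ∀ u, (v, u) ∉ forcesOf F K}

/-- The reversal of a relaxed chronology: each force is reversed and
the order of the time-steps is reversed. -/
def revChron (F : ℕ → Set (V × V)) (K : ℕ) : ℕ → Set (V × V) :=
  fun k => if 1 ≤ k ∧ k ≤ K then {p | (p.2, p.1) ∈ F (K - k + 1)} else ∅

/-- One round of performing all currently valid forces from the set of forces `S`. -/
def forceStep (valid : Set V → V → V → Prop) (S : Set (V × V)) (B : Set V) : Set V :=
  B ∪ {v | ∃ u, (u, v) ∈ S ∧ valid B u v}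

def forceIter (valid : Set V → V → V → Prop) (S : Set (V × V)) (B : Set V) : ℕ → Set V :=
  fun t => (forceStep valid S)^[t] B

/-- Propagation time of a set of forces `S` for starting set `B` on `U`. -/
noncomputable def ptForces (valid : Set V → V → V → Prop) (U : Set V)
    (S : Set (V × V)) (B : Set V) : ℕ :=
  sInf {t | U ⊆ forceIter valid S B t}

/-- `v` is active at time-step `k` of the relaxed chronology `F`:
it is blue after step `k` and has not yet performed a force. -/
def activeAt (B : Set V) (F : ℕ → Set (V × V)) (v : V) (k : ℕ) : Prop :=
  v ∈ expand B F k ∧ ∀ j ≤ k, ∀ u, (v, u) ∉ F j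

/-- The zero forcing number. -/
noncomputable def Z (G : SimpleGraph V) : ℕ :=
  sInf {n | ∃ B : Set V, B.ncard = n ∧ IsForcingSet (ZFValid G Set.univ) Set.univ B}

/-- The PSD forcing number. -/
noncomputable def Zplus (G : SimpleGraph V) : ℕ :=
  sInf {n | ∃ B : Set V, B.ncard = n ∧ IsForcingSet (PSDValid G Set.univ) Set.univ B}

/-- Standard `m`-propagation time `pt(G,m)`. -/
noncomputable def ptm (G : SimpleGraph V) (m : ℕ) : ℕ :=
  sInf {t | ∃ B : Set V, B.ncard = m ∧ IsForcingSet (ZFValid G Set.univ) Set.univ B ∧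
    propTime (ZFValid G Set.univ) Set.univ B = t}

/-- PSD `m`-propagation time `pt₊(G,m)`. -/
noncomputable def ptplusm (G : SimpleGraph V) (m : ℕ) : ℕ :=
  sInf {t | ∃ B : Set V, B.ncard = m ∧ IsForcingSet (PSDValid G Set.univ) Set.univ B ∧
    propTime (PSDValid G Set.univ) Set.univ B = t}

/-- Standard propagation time `pt(G)`. -/
noncomputable def pt (G : SimpleGraph V) : ℕ := ptm G (Z G)

/-- PSD propagation time `pt₊(G)`. -/
noncomputable def ptplus (G : SimpleGraph V) : ℕ := ptplusm G (Zplus G)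

/-- PSD throttling number `thr₊(G)`. -/
noncomputable def thrplus (G : SimpleGraph V) : ℕ :=
  sInf {t | ∃ B : Set V, IsForcingSet (PSDValid G Set.univ) Set.univ B ∧
    t = B.ncard + propTime (PSDValid G Set.univ) Set.univ B}

/-- Closed neighborhood of a set. -/
def closedNbhd (G : SimpleGraph V) (B : Set V) : Set V :=
  B ∪ {v | ∃ u ∈ B, G.Adj u v}

/-- Power domination process: the first step colors the closed neighborhood,
subsequent steps apply the standard zero forcing rule. -/
def pdIter (G : SimpleGraph V) (B : Set V) : ℕ → Set V
  | 0 => B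
  | 1 => closedNbhd G B
  | (k + 2) => step (ZFValid G Set.univ) (pdIter G B (k + 1))

/-- `B` is a power dominating set. -/
def IsPDSet (G : SimpleGraph V) (B : Set V) : Prop :=
  ∃ k, Set.univ ⊆ pdIter G B k

/-- Power propagation time of a set. -/
noncomputable def pdPropTime (G : SimpleGraph V) (B : Set V) : ℕ :=
  sInf {k | Set.univ ⊆ pdIter G B k}

/-- Power `m`-propagation time `ppt(G,m)`. -/
noncomputable def pptm (G : SimpleGraph V) (m : ℕ) : ℕ :=
  sInf {t | ∃ B : Set V, B.ncard = m ∧ IsPDSet G B ∧ pdPropTime G B = t}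

/-- Restriction of a family of forces to those with both endpoints in `W`. -/
def restrictF (F : ℕ → Set (V × V)) (W : Set V) : ℕ → Set (V × V) :=
  fun k => {p ∈ F k | p.1 ∈ W ∧ p.2 ∈ W}

/-- The forcing tree of `b` : all vertices reachable from `b` by a chain of forces in `S`. -/
def treeOf (S : Set (V × V)) (b : V) : Set V :=
  {w | Relation.ReflTransGen (fun a c => (a, c) ∈ S) b w}

open Classical in
/-- The endpoint, after `k` steps, of the path grown from `b ∈ B` in the
path bundle of the relaxed chronology `F` induced by the vertex `x`: the path is
extended by a force from its current endpoint into the component of white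
vertices containing `x`, whenever such a force occurs. -/
noncomputable def lastVert (G : SimpleGraph V) (B : Set V) (F : ℕ → Set (V × V))
    (x : V) (b : V) : ℕ → V
  | 0 => b
  | k + 1 =>
    if h : ∃ w, (lastVert G B F x b k, w) ∈ F (k + 1) ∧ x ∉ expand B F k ∧
        whiteConn G Set.univ (expand B F k) x w
    then h.choose else lastVert G B F x b k

/-- The vertex set of the path bundle of `F` induced by `x`. -/
def bundle (G : SimpleGraph V) (B : Set V) (F : ℕ → Set (V × V)) (x : V) (K : ℕ) : Set V :=
  {v | ∃ b ∈ B, ∃ j ≤ K, lastVert G B F x b j = v}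

/-- The path of the bundle grown from `b`, as a list of vertices. -/
noncomputable def bundlePath (G : SimpleGraph V) (B : Set V) (F : ℕ → Set (V × V))
    (x : V) (K : ℕ) (b : V) : List V :=
  ((List.range (K + 1)).map (lastVert G B F x b)).dedup

/-- A nonempty path in `G`, given as a list of distinct consecutively adjacent vertices. -/
def IsPathList (G : SimpleGraph V) (l : List V) : Prop :=
  l ≠ [] ∧ l.Nodup ∧ l.Chain' G.Adj

/-- `P` is an `(α,β)`-linkage: a collection of pairwise vertex-disjoint paths,
`α` consisting of one endpoint of each path and `β` of the other endpoints. -/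
def IsLinkage (G : SimpleGraph V) (α β : Set V) (P : Set (List V)) : Prop :=
  (∀ l ∈ P, IsPathList G l) ∧
  (∀ l ∈ P, ∀ l' ∈ P, l ≠ l' → ∀ v, v ∈ l → v ∉ l') ∧
  (∀ l ∈ P, ∀ l' ∈ P, l.head? = l'.head? → l = l') ∧
  (∀ l ∈ P, ∀ l' ∈ P, l.getLast? = l'.getLast? → l = l') ∧
  α = {v | ∃ l ∈ P, l.head? = some v} ∧
  β = {v | ∃ l ∈ P, l.getLast? = some v}

/-- `P` is a rigid linkage: for some `α`, `β` it is the unique `(α,β)`-linkage in `G`. -/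
def IsRigidLinkage (G : SimpleGraph V) (P : Set (List V)) : Prop :=
  ∃ α β, IsLinkage G α β P ∧ ∀ P', IsLinkage G α β P' → P' = P

/-- A path cover of `G` : `m` vertex-disjoint induced paths covering all vertices,
the `i`-th path having vertices `vtx i 0, …, vtx i (n i − 1)` in path order. -/
structure IsPathCover (G : SimpleGraph V) (m : ℕ) (n : Fin m → ℕ)
    (vtx : (i : Fin m) → Fin (n i) → V) : Prop where
  pos : ∀ i, 0 < n i
  inj : Function.Injective (fun p : (i : Fin m) × Fin (n i) => vtx p.1 p.2)
  cover : ∀ v : V, ∃ i j, vtx i j = v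
  induced : ∀ i (j j' : Fin (n i)),
    G.Adj (vtx i j) (vtx i j') ↔ ((j : ℕ) + 1 = (j' : ℕ) ∨ (j' : ℕ) + 1 = (j : ℕ))

/-- A witness that a path cover is a parallel increasing path cover: a collection of
block partitions of `{0,…,K}`, one per path, compatible with the edges of `G`. -/
structure IsPIPWitness (G : SimpleGraph V) (m : ℕ) (n : Fin m → ℕ)
    (vtx : (i : Fin m) → Fin (n i) → V) (K : ℕ)
    (A : (i : Fin m) → Fin (n i) → Finset ℕ) : Prop where
  mem : ∀ i j, A i j ⊆ Finset.range (K + 1)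
  nonempty : ∀ i j, (A i j).Nonempty
  partition : ∀ i, ∀ x ∈ Finset.range (K + 1), ∃! j, x ∈ A i j
  mono : ∀ i (j j' : Fin (n i)), (j : ℕ) < (j' : ℕ) → ∀ x ∈ A i j, ∀ y ∈ A i j', x < y
  edge : ∀ (i i' : Fin m) j j', i ≠ i' →
    G.Adj (vtx i j) (vtx i' j') → ((A i j) ∩ (A i' j')).Nonempty

/-- A parallel increasing path cover of `G`. -/
def IsPIP (G : SimpleGraph V) (m : ℕ) (n : Fin m → ℕ)
    (vtx : (i : Fin m) → Fin (n i) → V) : Prop :=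
  IsPathCover G m n vtx ∧ ∃ K A, IsPIPWitness G m n vtx K A

/-- The path cover given by `vtx` is the chain set of the family of forces `F` :
the underlying forces are exactly the consecutive pairs along the paths. -/
def IsChainSetOf (m : ℕ) (n : Fin m → ℕ) (vtx : (i : Fin m) → Fin (n i) → V)
    (F : ℕ → Set (V × V)) (K : ℕ) : Prop :=
  ∀ u w, (u, w) ∈ forcesOf F K ↔
    ∃ (i : Fin m) (j : Fin (n i)) (j' : Fin (n i)),
      u = vtx i j ∧ w = vtx i j' ∧ (j : ℕ) + 1 = (j' : ℕ)

end ZF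

/-!
Take a minimum zero forcing set `B₀` realising `pt(G) = T` and let `τ v` be the time at which
`v` turns blue. Put `H = ⌈T/2⌉` and start from the set of vertices that are blue at time `H` but
have not forced yet: it has `|B₀| = Z(G) = Z₊(G)` elements, one per forcing chain. From it, PSD
forcing runs the chronology backwards on `{τ ≤ H}` and forwards on `{τ > H}` simultaneously.
These are valid PSD forces: a vertex with `τ ≤ H` that is still white after `t` rounds has
performed its force by time `H - t`, so all its neighbours have `τ ≤ H - t`. Hence no white
component meets both halves, and within each half the uniqueness of the original forces gives PSD uniqueness.
After `t` rounds everything with `H - t ≤ τ ≤ H + t` is blue, so after `H` rounds all of `G` is.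
-/

namespace ZF

variable {V : Type*}

section Iter

variable (valid : Set V → V → V → Prop) (B : Set V)

theorem iter_succ (k : ℕ) : iter valid B (k + 1) = step valid (iter valid B k) :=
  Function.iterate_succ_apply' _ _ _

theorem iter_mono : Monotone (iter valid B) :=
  monotone_nat_of_le_succ fun k => by rw [iter_succ]; exact Set.subset_union_left

theorem subset_iter_propTime {U : Set V} (hB : IsForcingSet valid U B) :
    U ⊆ iter valid B (propTime valid U B) :=
  Nat.sInf_mem hB.2

/-- Junk value `0` if `v` never turns blue. -/
noncomputable def blueTime (v : V) : ℕ :=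
  sInf {k | v ∈ iter valid B k}

open Classical in
noncomputable def forcer (v : V) : V :=
  if h : ∃ u, valid (iter valid B (blueTime valid B v - 1)) u v then h.choose else v

def IdleUntil (j : ℕ) (u : V) : Prop :=
  ∀ v, 1 ≤ blueTime valid B v → blueTime valid B v ≤ j → forcer valid B v ≠ u

/-- `blueIdle k k` is the set of active vertices at time `k`, one per forcing chain;
`blueIdle H (H - t)` is the blue set after `t` steps of the reversed chronology truncated at `H`. -/
def blueIdle (k j : ℕ) : Set V :=
  {u | blueTime valid B u ≤ k ∧ IdleUntil valid B j u}

variable {valid B}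

theorem blueTime_le {v : V} {k : ℕ} (hv : v ∈ iter valid B k) : blueTime valid B v ≤ k :=
  Nat.sInf_le hv

variable (hcov : ∃ k, Set.univ ⊆ iter valid B k)
include hcov

theorem mem_iter_blueTime (v : V) : v ∈ iter valid B (blueTime valid B v) :=
  Nat.sInf_mem (hcov.imp fun _ hk => hk (Set.mem_univ v))

theorem mem_iter_iff {v : V} {k : ℕ} : v ∈ iter valid B k ↔ blueTime valid B v ≤ k :=
  ⟨blueTime_le, fun h => iter_mono valid B h (mem_iter_blueTime hcov v)⟩

theorem forcer_spec {v : V} (hv : 1 ≤ blueTime valid B v) :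
    valid (iter valid B (blueTime valid B v - 1)) (forcer valid B v) v := by
  have hmem := mem_iter_blueTime hcov v
  rw [show blueTime valid B v = blueTime valid B v - 1 + 1 by omega, iter_succ] at hmem
  have hex : ∃ u, valid (iter valid B (blueTime valid B v - 1)) u v :=
    hmem.resolve_left fun h => by have := blueTime_le h; omega
  rw [forcer, dif_pos hex]
  exact hex.choose_spec

end Iter

section ZeroForcing

variable {G : SimpleGraph V} {B₀ : Set V}

local notation "τ" => blueTime (ZFValid G Set.univ) B₀
local notation "φ" => forcer (ZFValid G Set.univ) B₀

variable (hcov : ∃ k, Set.univ ⊆ iter (ZFValid G Set.univ) B₀ k)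
include hcov

theorem blueTime_forcer_lt {v : V} (hv : 1 ≤ τ v) : τ (φ v) < τ v := by
  have := blueTime_le (forcer_spec hcov hv).2.2.1
  omega

theorem adj_forcer {v : V} (hv : 1 ≤ τ v) : G.Adj (φ v) v :=
  (forcer_spec hcov hv).2.2.2.2.1

theorem eq_of_adj_forcer {v w : V} (hv : 1 ≤ τ v) (hadj : G.Adj (φ v) w) (hvw : τ v ≤ τ w) :
    w = v :=
  (forcer_spec hcov hv).2.2.2.2.2 w trivial hadj fun hw => by have := blueTime_le hw; omega

theorem blueTime_le_of_adj_forcer {v w : V} (hv : 1 ≤ τ v) (hadj : G.Adj (φ v) w) :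
    τ w ≤ τ v := by
  by_contra! hlt
  rw [eq_of_adj_forcer hcov hv hadj hlt.le] at hlt
  exact lt_irrefl _ hlt

theorem forcer_injOn : Set.InjOn φ {v | 1 ≤ τ v} := by
  intro v hv v' hv' he
  rcases le_total (τ v) (τ v') with hle | hle
  · exact (eq_of_adj_forcer hcov hv (he ▸ adj_forcer hcov hv') hle).symm
  · exact eq_of_adj_forcer hcov hv' (he ▸ adj_forcer hcov hv) hle

theorem blueTime_le_of_adj_of_notMem_blueIdle {H j : ℕ} {u w : V} (hu : τ u ≤ H)
    (hu' : u ∉ blueIdle (ZFValid G Set.univ) B₀ H j) (hadj : G.Adj u w) : τ w ≤ j := by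
  obtain ⟨v, hv, hvj, rfl⟩ : ∃ v, 1 ≤ τ v ∧ τ v ≤ j ∧ φ v = u := by
    by_contra! h
    exact hu' ⟨hu, h⟩
  exact (blueTime_le_of_adj_forcer hcov hv hadj).trans hvj

theorem blueIdle_zero : blueIdle (ZFValid G Set.univ) B₀ 0 0 = B₀ := by
  ext u
  refine ⟨fun hu => mem_iter_iff hcov |>.mpr hu.1, fun hu => ⟨blueTime_le (k := 0) hu, ?_⟩⟩
  intro v hv hv0
  omega

theorem blueIdle_succ (k : ℕ) :
    blueIdle (ZFValid G Set.univ) B₀ (k + 1) (k + 1) =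
      (blueIdle (ZFValid G Set.univ) B₀ k k \ φ '' {v | τ v = k + 1}) ∪ {v | τ v = k + 1} := by
  ext u
  simp only [blueIdle, IdleUntil, Set.mem_union, Set.mem_sdiff, Set.mem_image, Set.mem_ofPred_eq]
  constructor
  · rintro ⟨hu, hidle⟩
    rcases Nat.lt_or_ge (τ u) (k + 1) with hlt | hge
    · refine Or.inl ⟨⟨by omega, fun v hv hvk => hidle v hv (by omega)⟩, ?_⟩
      rintro ⟨v, hvk, rfl⟩
      exact hidle v (by omega) hvk.le rfl
    · exact Or.inr (by omega)
  · rintro (⟨⟨hu, hidle⟩, hnot⟩ | hu)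
    · refine ⟨by omega, fun v hv hvk heq => ?_⟩
      rcases Nat.lt_or_ge (τ v) (k + 1) with hlt | hge
      · exact hidle v hv (by omega) heq
      · exact hnot ⟨v, by omega, heq⟩
    · refine ⟨hu.le, fun v hv _ heq => ?_⟩
      have := blueTime_forcer_lt hcov hv
      rw [heq] at this
      omega

/-- A force at time `k + 1` swaps its forcer for the forced vertex in the active set. -/
theorem ncard_blueIdle [Finite V] (k : ℕ) :
    (blueIdle (ZFValid G Set.univ) B₀ k k).ncard = B₀.ncard := by
  induction k with
  | zero => rw [blueIdle_zero hcov]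
  | succ k ih =>
    set A := blueIdle (ZFValid G Set.univ) B₀ k k
    set N := {v | τ v = k + 1}
    have hNA : Disjoint (A \ φ '' N) N :=
      Set.disjoint_left.mpr fun u hu (huN : τ u = k + 1) => by have := hu.1.1; omega
    have himage : φ '' N ⊆ A := by
      rintro _ ⟨v, hv : τ v = k + 1, rfl⟩
      refine ⟨by have := blueTime_forcer_lt hcov (v := v) (by omega); omega, ?_⟩
      intro v' hv' hv'k heq
      have := forcer_injOn hcov hv' (show 1 ≤ τ v by omega) heq
      subst this
      omega
    have hinj : (φ '' N).ncard = N.ncard :=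
      (forcer_injOn hcov |>.mono fun v (hv : τ v = k + 1) => show 1 ≤ τ v by omega).ncard_image
    rw [blueIdle_succ hcov, Set.ncard_union_eq hNA, Set.ncard_sdiff himage, hinj, ← ih,
      Nat.sub_add_cancel (hinj ▸ Set.ncard_le_ncard himage)]

end ZeroForcing

section PSD

variable {G : SimpleGraph V} {U : Set V}

theorem whiteConn_anti {B B' : Set V} (hBB' : B ⊆ B') {x y : V}
    (hc : whiteConn G U B' x y) : whiteConn G U B x y :=
  Relation.ReflTransGen.mono (fun _ _ h => ⟨h.1, h.2.1, h.2.2.1, fun hm => h.2.2.2.1 (hBB' hm),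
    fun hm => h.2.2.2.2 (hBB' hm)⟩) _ _ hc

theorem step_psdValid_mono : Monotone (step (PSDValid G U)) := by
  intro B B' hBB' x hx
  by_cases hxB' : x ∈ B'
  · exact Or.inl hxB'
  obtain hxB | ⟨u, hu, hx, huB, -, hadj, honly⟩ := hx
  · exact absurd (hBB' hxB) hxB'
  exact Or.inr ⟨u, hu, hx, hBB' huB, hxB', hadj, fun w hw hadj' hwB' hconn =>
    honly w hw hadj' (fun hm => hwB' (hBB' hm)) (whiteConn_anti hBB' hconn)⟩

end PSD

/-- The blue set after `t` rounds of running the standard chronology of `B₀` backwards from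
time `H` on `{τ ≤ H}` and forwards on `{τ > H}`. -/
def twoWayBlue (G : SimpleGraph V) (B₀ : Set V) (H t : ℕ) : Set V :=
  blueIdle (ZFValid G Set.univ) B₀ H (H - t) ∪
    {v | H < blueTime (ZFValid G Set.univ) B₀ v ∧ blueTime (ZFValid G Set.univ) B₀ v ≤ H + t}

section TwoWay

variable {G : SimpleGraph V} {B₀ : Set V} {H t : ℕ}

local notation "τ" => blueTime (ZFValid G Set.univ) B₀
local notation "φ" => forcer (ZFValid G Set.univ) B₀

theorem univ_subset_twoWayBlue (h2H : Set.univ ⊆ iter (ZFValid G Set.univ) B₀ (2 * H)) :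
    Set.univ ⊆ twoWayBlue G B₀ H H := by
  intro v _
  have := blueTime_le (h2H (Set.mem_univ v))
  rcases le_or_gt (τ v) H with hle | hgt
  · exact Or.inl ⟨hle, fun z hz hzH => by omega⟩
  · exact Or.inr ⟨hgt, by omega⟩

variable (hcov : ∃ k, Set.univ ⊆ iter (ZFValid G Set.univ) B₀ k)
include hcov

theorem lt_blueTime_of_whiteConn {a w : V} (ha : H + t < τ a)
    (hconn : whiteConn G Set.univ (twoWayBlue G B₀ H t) a w) : H + t < τ w := by
  induction hconn with
  | refl => exact ha
  | tail _ hbc ih =>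
    obtain ⟨hadj, -, -, -, hc⟩ := hbc
    rcases le_or_gt (τ _) H with hle | hlt
    · have := blueTime_le_of_adj_of_notMem_blueIdle hcov hle (fun h => hc (Or.inl h)) hadj.symm
      omega
    · exact not_le.mp fun h => hc (Or.inr ⟨hlt, h⟩)

theorem notMem_blueIdle_of_whiteConn {a w : V} (ha : τ a ≤ H)
    (ha' : a ∉ blueIdle (ZFValid G Set.univ) B₀ H (H - t))
    (hconn : whiteConn G Set.univ (twoWayBlue G B₀ H t) a w) :
    τ w ≤ H ∧ w ∉ blueIdle (ZFValid G Set.univ) B₀ H (H - t) := by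
  induction hconn with
  | refl => exact ⟨ha, ha'⟩
  | tail _ hbc ih =>
    obtain ⟨hadj, -, -, -, hc⟩ := hbc
    have := blueTime_le_of_adj_of_notMem_blueIdle hcov ih.1 ih.2 hadj
    exact ⟨by omega, fun h => hc (Or.inl h)⟩

theorem psdValid_twoWayBlue_backward {y : V} (hy : 1 ≤ τ y) (hyt : τ y = H - t)
    (hx : φ y ∉ twoWayBlue G B₀ H t) : PSDValid G Set.univ (twoWayBlue G B₀ H t) y (φ y) := by
  have hyB : y ∈ twoWayBlue G B₀ H t := by
    refine Or.inl ⟨by omega, fun z hz _ heq => ?_⟩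
    have := blueTime_forcer_lt hcov hz
    rw [heq] at this
    omega
  have hxτ : τ (φ y) ≤ H := by have := blueTime_forcer_lt hcov hy; omega
  have hxI : φ y ∉ blueIdle (ZFValid G Set.univ) B₀ H (H - t) := fun h => hx (Or.inl h)
  refine ⟨trivial, trivial, hyB, hx, (adj_forcer hcov hy).symm, fun w _ hadj _ hconn => ?_⟩
  obtain ⟨hw, hwI⟩ := notMem_blueIdle_of_whiteConn hcov hxτ hxI hconn
  obtain ⟨z, hz, hzt, rfl⟩ : ∃ z, 1 ≤ τ z ∧ τ z ≤ H - t ∧ φ z = w := by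
    by_contra! h
    exact hwI ⟨hw, h⟩
  rw [eq_of_adj_forcer hcov hz hadj.symm (by omega)]

theorem psdValid_twoWayBlue_forward {x : V} (hx : τ x = H + t + 1) :
    PSDValid G Set.univ (twoWayBlue G B₀ H t) (φ x) x := by
  have hx1 : 1 ≤ τ x := by omega
  have hlt := blueTime_forcer_lt hcov hx1
  have huB : φ x ∈ twoWayBlue G B₀ H t := by
    rcases le_or_gt (τ (φ x)) H with hle | hgt
    · refine Or.inl ⟨hle, fun z hz _ heq => ?_⟩
      have := forcer_injOn hcov hz hx1 heq
      subst this
      omega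
    · exact Or.inr ⟨hgt, by omega⟩
  have hxB : x ∉ twoWayBlue G B₀ H t := by
    rintro (⟨h, -⟩ | ⟨-, h⟩) <;> omega
  refine ⟨trivial, trivial, huB, hxB, adj_forcer hcov hx1, fun w _ hadj _ hconn => ?_⟩
  have := lt_blueTime_of_whiteConn hcov (by omega) hconn
  exact eq_of_adj_forcer hcov hx1 hadj (by omega)

theorem twoWayBlue_succ_subset :
    twoWayBlue G B₀ H (t + 1) ⊆ step (PSDValid G Set.univ) (twoWayBlue G B₀ H t) := by
  intro x hx
  by_cases hxB : x ∈ twoWayBlue G B₀ H t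
  · exact Or.inl hxB
  right
  rcases hx with ⟨hxH, hidle⟩ | ⟨hHx, hxt⟩
  · obtain ⟨y, hy, hyt, rfl⟩ : ∃ y, 1 ≤ τ y ∧ τ y ≤ H - t ∧ φ y = x := by
      by_contra! h
      exact hxB (Or.inl ⟨hxH, h⟩)
    have hyt' : τ y = H - t := by
      by_contra hne
      exact hidle y hy (by omega) rfl
    exact ⟨y, psdValid_twoWayBlue_backward hcov hy hyt' hxB⟩
  · have : τ x = H + t + 1 := by
      by_contra hne
      exact hxB (Or.inr ⟨hHx, by omega⟩)
    exact ⟨φ x, psdValid_twoWayBlue_forward hcov this⟩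

theorem twoWayBlue_subset_iter (t : ℕ) :
    twoWayBlue G B₀ H t ⊆ iter (PSDValid G Set.univ) (blueIdle (ZFValid G Set.univ) B₀ H H) t := by
  induction t with
  | zero =>
    rintro x (hx | ⟨h, h'⟩)
    · exact hx
    · omega
  | succ t ih => exact (twoWayBlue_succ_subset hcov).trans (iter_succ .. ▸ step_psdValid_mono ih)

end TwoWay

section Minimum

variable (G : SimpleGraph V)

theorem exists_ncard_eq_Z_propTime_eq_pt :
    ∃ B : Set V, B.ncard = Z G ∧ IsForcingSet (ZFValid G Set.univ) Set.univ B ∧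
      propTime (ZFValid G Set.univ) Set.univ B = pt G := by
  obtain ⟨B, hB, hforce⟩ : Z G ∈ {n | ∃ B : Set V, B.ncard = n ∧
      IsForcingSet (ZFValid G Set.univ) Set.univ B} :=
    Nat.sInf_mem ⟨_, Set.univ, rfl, subset_rfl, 0, subset_rfl⟩
  exact Nat.sInf_mem (s := {t | ∃ B : Set V, B.ncard = Z G ∧
      IsForcingSet (ZFValid G Set.univ) Set.univ B ∧ propTime (ZFValid G Set.univ) Set.univ B = t})
    ⟨_, B, hB, hforce, rfl⟩

variable {G}

theorem ptplus_le_propTime {B : Set V} (hcard : B.ncard = Zplus G)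
    (hB : IsForcingSet (PSDValid G Set.univ) Set.univ B) :
    ptplus G ≤ propTime (PSDValid G Set.univ) Set.univ B :=
  Nat.sInf_le ⟨B, hcard, hB, rfl⟩

end Minimum

end ZF

theorem ptplus_le_general {V : Type*} [Fintype V] (G : SimpleGraph V)
    (h : ZF.Zplus G = ZF.Z G) :
    ZF.ptplus G ≤ (ZF.pt G + 1) / 2 := by
  obtain ⟨B₀, hcard, hB₀, hpt⟩ := ZF.exists_ncard_eq_Z_propTime_eq_pt G
  set H := (ZF.pt G + 1) / 2
  set zf := ZF.ZFValid G Set.univ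
  set psd := ZF.PSDValid G Set.univ
  have hzf : Set.univ ⊆ ZF.iter zf B₀ (2 * H) :=
    hpt ▸ ZF.subset_iter_propTime _ _ hB₀ |>.trans (ZF.iter_mono _ _ (by omega))
  have hpsd : Set.univ ⊆ ZF.iter psd (ZF.blueIdle zf B₀ H H) H :=
    (ZF.univ_subset_twoWayBlue hzf).trans (ZF.twoWayBlue_subset_iter ⟨_, hzf⟩ H)
  calc ZF.ptplus G ≤ ZF.propTime psd Set.univ (ZF.blueIdle zf B₀ H H) :=
        ZF.ptplus_le_propTime (by rw [ZF.ncard_blueIdle ⟨_, hzf⟩, hcard, h])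
          ⟨Set.subset_univ _, H, hpsd⟩
    _ ≤ H := Nat.sInf_le hpsd

/-- If `Z₊(G) = Z(G)`, then `pt₊(G) ≤ ⌈pt(G)/2⌉`. -/
theorem ptplus_le {V : Type*} [Fintype V] [DecidableEq V] (G : SimpleGraph V)
    (h : ZF.Zplus G = ZF.Z G) :
    ZF.ptplus G ≤ (ZF.pt G + 1) / 2 :=
  ptplus_le_general G h
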